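/- Let Ψ be a quasi-hyperbolic continuous linear cocycle over a compact base 𝐁. If x ∈ 𝐁, a ∈ α(x) and b ∈ ω(x), then dim E^u(b) ≥ dim 𝐄 − dim E^s(x) and dim E^s(a) ≥ dim 𝐄 − dim E^u(x). -/

import Mathlib

open Filter Topology

/-- A continuous linear cocycle (`ℝ`-action by bundle isomorphisms on the
trivial vector bundle `B × E`) over a continuous flow on `B`. -/
structure LinearCocycle (B E : Type*) [TopologicalSpace B]
    [NormedAddCommGroup E] [NormedSpace ℝ E] where
  flow : ℝ → B → B
  flow_cont : Continuous fun p : ℝ × B => flow p.1 p.2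
  flow_zero : ∀ b, flow 0 b = b
  flow_add : ∀ s t b, flow s (flow t b) = flow (s + t) b
  P : ℝ → B → E →L[ℝ] E
  P_cont : Continuous fun p : ℝ × B => P p.1 p.2
  P_zero : ∀ b, P 0 b = ContinuousLinearMap.id ℝ E
  P_comp : ∀ s t b, (P s (flow t b)).comp (P t b) = P (s + t) b

variable {B E : Type*} [TopologicalSpace B]
  [NormedAddCommGroup E] [NormedSpace ℝ E]

/-- Quasi-hyperbolicity: every nonzero vector has unbounded orbit. -/
def LinearCocycle.IsQuasiHyperbolic (Φ : LinearCocycle B E) : Prop :=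
  ∀ b : B, ∀ v : E, v ≠ 0 → ∀ C : ℝ, ∃ t : ℝ, C < ‖Φ.P t b v‖

/-- The subspace of vectors with bounded forward orbit. -/
def LinearCocycle.stable (Φ : LinearCocycle B E) (b : B) : Submodule ℝ E where
  carrier := {v | ∃ C : ℝ, ∀ t > (0:ℝ), ‖Φ.P t b v‖ ≤ C}
  add_mem' := by
    rintro u v ⟨C₁, h₁⟩ ⟨C₂, h₂⟩
    exact ⟨C₁ + C₂, fun t ht => by
      simpa [map_add] using (norm_add_le (Φ.P t b u) (Φ.P t b v)).trans
        (add_le_add (h₁ t ht) (h₂ t ht))⟩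
  zero_mem' := ⟨0, fun t ht => by simp⟩
  smul_mem' := by
    rintro c v ⟨C, h⟩
    exact ⟨‖c‖ * C, fun t ht => by
      rw [map_smul, norm_smul]
      exact mul_le_mul_of_nonneg_left (h t ht) (norm_nonneg c)⟩

/-- The subspace of vectors with bounded backward orbit. -/
def LinearCocycle.unstable (Φ : LinearCocycle B E) (b : B) : Submodule ℝ E where
  carrier := {v | ∃ C : ℝ, ∀ t > (0:ℝ), ‖Φ.P (-t) b v‖ ≤ C}
  add_mem' := by
    rintro u v ⟨C₁, h₁⟩ ⟨C₂, h₂⟩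
    exact ⟨C₁ + C₂, fun t ht => by
      simpa [map_add] using (norm_add_le (Φ.P (-t) b u) (Φ.P (-t) b v)).trans
        (add_le_add (h₁ t ht) (h₂ t ht))⟩
  zero_mem' := ⟨0, fun t ht => by simp⟩
  smul_mem' := by
    rintro c v ⟨C, h⟩
    exact ⟨‖c‖ * C, fun t ht => by
      rw [map_smul, norm_smul]
      exact mul_le_mul_of_nonneg_left (h t ht) (norm_nonneg c)⟩

/-- Uniform hyperbolicity of a linear cocycle over an invariant subset `Λ`. -/
def LinearCocycle.IsHyperbolicOn (Φ : LinearCocycle B E) (Λ : Set B) : Prop :=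
  ∃ Es Eu : B → Submodule ℝ E,
    (∀ t : ℝ, ∀ b ∈ Λ, (Es b).map (Φ.P t b : E →ₗ[ℝ] E) = Es (Φ.flow t b)) ∧
    (∀ t : ℝ, ∀ b ∈ Λ, (Eu b).map (Φ.P t b : E →ₗ[ℝ] E) = Eu (Φ.flow t b)) ∧
    (∀ b ∈ Λ, IsCompl (Es b) (Eu b)) ∧
    ∃ T > (0:ℝ), ∀ b ∈ Λ,
      (∀ v ∈ Es b, v ≠ 0 → ‖Φ.P T b v‖ < (1/2) * ‖v‖) ∧
      (∀ v ∈ Eu b, v ≠ 0 → ‖Φ.P (-T) b v‖ < (1/2) * ‖v‖)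

/-- The `ω`-limit set of `x` under the flow of the cocycle. -/
def LinearCocycle.omegaLimit (Φ : LinearCocycle B E) (x : B) : Set B :=
  {a | MapClusterPt a atTop fun t : ℝ => Φ.flow t x}

/-- The `α`-limit set of `x` under the flow of the cocycle. -/
def LinearCocycle.alphaLimit (Φ : LinearCocycle B E) (x : B) : Set B :=
  {a | MapClusterPt a atBot fun t : ℝ => Φ.flow t x}

/-! Over a compact base quasi-hyperbolicity is uniform: there is a `T` such that every unit vector
leaves the closed unit ball within time `T`, forward or backward. Hence no orbit segment can rise
far above both of its endpoints. Consequently, on a complement `W` of `E^s(x)` the cocycle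
eventually expands, after which the backward orbits over `[0, t]` of vectors of `P(t, x) W` stay
below a fixed multiple of their norm. Along times with `ψ_t x → b`, limits of unit vectors of these
`dim W`-dimensional spaces therefore lie in `E^u(b)`, which forces `dim E^u(b) ≥ dim W`. The second
inequality is the first one for the time-reversed cocycle. -/

open Module

theorem exists_tendsto_of_norm_eq_one {ι F : Type*} [NormedAddCommGroup F] [ProperSpace F]
    (𝒰 : Ultrafilter ι) {v : ι → F} (hv : ∀ i, ‖v i‖ = 1) :
    ∃ v₀, ‖v₀‖ = 1 ∧ Tendsto v 𝒰 (𝓝 v₀) := by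
  obtain ⟨v₀, hv₀, hlim⟩ := (isCompact_sphere (0 : F) 1).ultrafilter_le_nhds' (𝒰.map v)
    (Ultrafilter.mem_map.mpr (Eventually.of_forall fun i => mem_sphere_zero_iff_norm.mpr (hv i)))
  exact ⟨v₀, mem_sphere_zero_iff_norm.mp hv₀, hlim⟩

/-- Lower semicontinuity of dimension: `k`-dimensional subspaces accumulate on a subspace of
dimension at least `k`. -/
theorem le_finrank_of_forall_tendsto_mem {ι F : Type*} [NormedAddCommGroup F] [NormedSpace ℝ F]
    [FiniteDimensional ℝ F] (𝒰 : Ultrafilter ι) {V : ι → Submodule ℝ F} {k : ℕ}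
    (hV : ∀ i, k ≤ finrank ℝ (V i)) {U : Submodule ℝ F}
    (hU : ∀ (z : ι → F) (z₀ : F), (∀ i, z i ∈ V i) → (∀ i, ‖z i‖ = 1) →
      Tendsto z 𝒰 (𝓝 z₀) → z₀ ∈ U) :
    k ≤ finrank ℝ U := by
  by_contra! hk
  obtain ⟨Z, hUZ⟩ := U.exists_isCompl
  have hmeet : ∀ i, ∃ z ∈ V i ⊓ Z, ‖z‖ = 1 := by
    intro i
    obtain ⟨z, hz, hz0⟩ := (V i ⊓ Z).ne_bot_iff.mp fun hbot => by
      have := Submodule.finrank_add_finrank_le_of_disjoint (disjoint_iff.mpr hbot)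
      have := Submodule.finrank_add_eq_of_isCompl hUZ
      have := hV i
      omega
    exact ⟨‖z‖⁻¹ • z, (V i ⊓ Z).smul_mem _ hz, norm_smul_inv_norm hz0⟩
  choose z hz hz1 using hmeet
  obtain ⟨z₀, hz₀, hlim⟩ := exists_tendsto_of_norm_eq_one 𝒰 hz1
  have hz₀Z : z₀ ∈ Z := Z.closed_of_finiteDimensional.mem_of_tendsto hlim
    (Eventually.of_forall fun i => (hz i).2)
  have hz₀U : z₀ ∈ U := hU z z₀ (fun i => (hz i).1) hz1 hlim
  exact norm_ne_zero_iff.mp (hz₀ ▸ one_ne_zero)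
    (Submodule.disjoint_def.mp hUZ.disjoint z₀ hz₀U hz₀Z)

namespace LinearCocycle

variable (Φ : LinearCocycle B E)

theorem P_apply (s t : ℝ) (y : B) (v : E) :
    Φ.P s (Φ.flow t y) (Φ.P t y v) = Φ.P (s + t) y v := by
  rw [← Φ.P_comp]
  rfl

theorem P_injective (t : ℝ) (y : B) : Function.Injective (Φ.P t y) :=
  Function.LeftInverse.injective (g := Φ.P (-t) (Φ.flow t y)) fun v => by
    rw [P_apply, neg_add_cancel, P_zero]
    rfl

theorem continuous_apply : Continuous fun p : (ℝ × B) × E => Φ.P p.1.1 p.1.2 p.2 :=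
  (Φ.P_cont.comp continuous_fst).clm_apply continuous_snd

theorem norm_apply_le_of_tendsto {ι : Type*} {l : Filter ι} [l.NeBot] {y : ι → B} {y₀ : B}
    {v : ι → E} {v₀ : E} (hy : Tendsto y l (𝓝 y₀)) (hv : Tendsto v l (𝓝 v₀)) (τ : ℝ) {C : ℝ}
    (hC : ∀ᶠ i in l, ‖Φ.P τ (y i) (v i)‖ ≤ C) :
    ‖Φ.P τ y₀ v₀‖ ≤ C :=
  le_of_tendsto ((Φ.continuous_apply.tendsto _).comp
    ((tendsto_const_nhds.prodMk_nhds hy).prodMk_nhds hv)).norm hC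

theorem exists_opNorm_le [CompactSpace B] (r : ℝ) :
    ∃ M, 0 ≤ M ∧ ∀ s y, |s| ≤ r → ‖Φ.P s y‖ ≤ M := by
  obtain ⟨M, hM⟩ := (isCompact_Icc.prod isCompact_univ).exists_bound_of_continuousOn
    (Φ.P_cont.continuousOn (s := Set.Icc (-r) r ×ˢ Set.univ))
  exact ⟨max M 0, le_max_right _ _, fun s y hs =>
    (hM (s, y) ⟨abs_le.mp hs, trivial⟩).trans (le_max_left _ _)⟩

def reverse : LinearCocycle B E where
  flow t := Φ.flow (-t)
  flow_cont := Φ.flow_cont.comp (continuous_fst.neg.prodMk continuous_snd)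
  flow_zero := by simpa using Φ.flow_zero
  flow_add s t b := by simp only [Φ.flow_add, neg_add]
  P t := Φ.P (-t)
  P_cont := Φ.P_cont.comp (continuous_fst.neg.prodMk continuous_snd)
  P_zero := by simpa using Φ.P_zero
  P_comp s t b := by simp only [Φ.P_comp, neg_add]

variable {Φ}

theorem IsQuasiHyperbolic.reverse (hqh : Φ.IsQuasiHyperbolic) : Φ.reverse.IsQuasiHyperbolic :=
  fun b v hv C => (hqh b v hv C).elim fun t ht => ⟨-t, by simpa [LinearCocycle.reverse] using ht⟩

theorem stable_reverse (y : B) : Φ.reverse.stable y = Φ.unstable y := rfl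

theorem unstable_reverse (y : B) : Φ.reverse.unstable y = Φ.stable y := by
  ext v
  simp [reverse, stable, unstable]

theorem omegaLimit_reverse (x : B) : Φ.reverse.omegaLimit x = Φ.alphaLimit x := by
  ext a
  simp only [omegaLimit, alphaLimit, MapClusterPt, Set.mem_ofPred_eq, ← map_neg_atTop, map_map]
  rfl

variable [CompactSpace B] [FiniteDimensional ℝ E]

theorem IsQuasiHyperbolic.exists_lt_norm_apply (hqh : Φ.IsQuasiHyperbolic) :
    ∃ T, ∀ y w, ‖w‖ = 1 → ∃ τ, |τ| ≤ T ∧ 1 < ‖Φ.P τ y w‖ := by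
  by_contra! h
  choose y w hw hbdd using fun n : ℕ => h n
  let 𝒰 := Ultrafilter.of (atTop : Filter ℕ)
  obtain ⟨y₀, -, hy⟩ := isCompact_univ.ultrafilter_le_nhds' (𝒰.map y) univ_mem
  obtain ⟨w₀, hw₀, hlim⟩ := exists_tendsto_of_norm_eq_one 𝒰 hw
  obtain ⟨τ, hτ⟩ := hqh y₀ w₀ (norm_ne_zero_iff.mp (hw₀ ▸ one_ne_zero)) 1
  refine hτ.not_ge (Φ.norm_apply_le_of_tendsto hy hlim τ ?_)
  exact ((tendsto_natCast_atTop_atTop.eventually_ge_atTop |τ|).filter_mono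
    (Ultrafilter.of_le _)).mono fun n hn => hbdd n τ hn

/-- An orbit segment is dominated by its endpoints: otherwise, rescaled at its highest point it
would stay in the unit ball for time `T` in both directions. -/
theorem IsQuasiHyperbolic.exists_norm_apply_le_max (hqh : Φ.IsQuasiHyperbolic) :
    ∃ K, ∀ y v t, ∀ s ∈ Set.Icc 0 t, ‖Φ.P s y v‖ ≤ K * max ‖v‖ ‖Φ.P t y v‖ := by
  obtain ⟨T, hT⟩ := hqh.exists_lt_norm_apply
  obtain ⟨M, hM0, hM⟩ := Φ.exists_opNorm_le T
  refine ⟨M, fun y v t s hs => ?_⟩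
  obtain ⟨σ, hσ, hσmax⟩ := isCompact_Icc.exists_isMaxOn ⟨s, hs⟩
    (Φ.continuous_apply.comp (by fun_prop : Continuous fun u : ℝ => ((u, y), v))).norm.continuousOn
  have hmax : ∀ u ∈ Set.Icc 0 t, ‖Φ.P u y v‖ ≤ ‖Φ.P σ y v‖ := isMaxOn_iff.mp hσmax
  refine (hmax s hs).trans ?_
  by_cases hσT : σ < T
  · calc ‖Φ.P σ y v‖ ≤ M * ‖v‖ :=
          (Φ.P σ y).le_of_opNorm_le (hM σ y (abs_le.mpr ⟨by linarith [hσ.1], hσT.le⟩)) v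
      _ ≤ M * max ‖v‖ ‖Φ.P t y v‖ := by gcongr; exact le_max_left _ _
  by_cases htσ : t - σ < T
  · calc ‖Φ.P σ y v‖ = ‖Φ.P (σ - t) (Φ.flow t y) (Φ.P t y v)‖ := by rw [P_apply, sub_add_cancel]
      _ ≤ M * ‖Φ.P t y v‖ := (Φ.P _ _).le_of_opNorm_le
          (hM _ _ (abs_le.mpr ⟨by linarith, by linarith [hσ.2]⟩)) _
      _ ≤ M * max ‖v‖ ‖Φ.P t y v‖ := by gcongr; exact le_max_right _ _
  rw [not_lt] at hσT htσ
  by_contra! hlt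
  have hN : 0 < ‖Φ.P σ y v‖ := (mul_nonneg hM0 (le_max_of_le_left (norm_nonneg v))).trans_lt hlt
  obtain ⟨τ, hτ, hgt⟩ := hT (Φ.flow σ y) (‖Φ.P σ y v‖⁻¹ • Φ.P σ y v)
    (norm_smul_inv_norm (norm_pos_iff.mp hN))
  refine hgt.not_ge ?_
  rw [map_smul, P_apply, norm_smul, norm_inv, norm_norm, inv_mul_le_one₀ hN]
  exact hmax _ ⟨by linarith [neg_abs_le τ], by linarith [le_abs_self τ]⟩

theorem IsQuasiHyperbolic.exists_norm_le_norm_apply (hqh : Φ.IsQuasiHyperbolic) (x : B)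
    {W : Submodule ℝ E} (hW : Disjoint (Φ.stable x) W) :
    ∃ t₀, ∀ t ≥ t₀, ∀ v ∈ W, ‖v‖ ≤ ‖Φ.P t x v‖ := by
  obtain ⟨K, hK⟩ := hqh.exists_norm_apply_le_max
  by_contra! h
  choose t ht v hvW hv using fun n : ℕ => h n
  have hv0 : ∀ n, v n ≠ 0 := fun n h0 => by simpa [h0] using hv n
  set u := fun n => ‖v n‖⁻¹ • v n
  have hu : ∀ n, ‖u n‖ = 1 := fun n => norm_smul_inv_norm (hv0 n)
  have hu_bdd : ∀ n, ∀ s ∈ Set.Icc 0 (t n), ‖Φ.P s x (u n)‖ ≤ K := by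
    intro n s hs
    have hlt : ‖Φ.P (t n) x (u n)‖ < 1 := by
      rw [map_smul, norm_smul, norm_inv, norm_norm, inv_mul_lt_one₀ (norm_pos_iff.mpr (hv0 n))]
      exact hv n
    simpa [hu n, max_eq_left hlt.le] using hK x (u n) (t n) s hs
  let 𝒰 := Ultrafilter.of (atTop : Filter ℕ)
  obtain ⟨u₀, hu₀, hlim⟩ := exists_tendsto_of_norm_eq_one 𝒰 hu
  have hu₀W : u₀ ∈ W := W.closed_of_finiteDimensional.mem_of_tendsto hlim
    (Eventually.of_forall fun n => W.smul_mem _ (hvW n))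
  have hu₀s : u₀ ∈ Φ.stable x := ⟨K, fun s hs =>
    Φ.norm_apply_le_of_tendsto tendsto_const_nhds hlim s
    (((tendsto_natCast_atTop_atTop.eventually_ge_atTop s).filter_mono (Ultrafilter.of_le _)).mono
      fun n hn => hu_bdd n s ⟨hs.le, hn.trans (ht n)⟩)⟩
  exact norm_ne_zero_iff.mp (hu₀ ▸ one_ne_zero) (Submodule.disjoint_def.mp hW u₀ hu₀s hu₀W)

theorem IsQuasiHyperbolic.exists_norm_apply_le_norm_apply (hqh : Φ.IsQuasiHyperbolic) (x : B)
    {W : Submodule ℝ E} (hW : Disjoint (Φ.stable x) W) :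
    ∃ K t₀, ∀ t ≥ t₀, ∀ v ∈ W, ∀ s ∈ Set.Icc 0 t, ‖Φ.P s x v‖ ≤ K * ‖Φ.P t x v‖ := by
  obtain ⟨K, hK⟩ := hqh.exists_norm_apply_le_max
  obtain ⟨t₀, ht₀⟩ := hqh.exists_norm_le_norm_apply x hW
  exact ⟨K, t₀, fun t ht v hv s hs => by simpa [max_eq_right (ht₀ t ht v hv)] using hK x v t s hs⟩

theorem IsQuasiHyperbolic.finrank_sub_finrank_stable_le (hqh : Φ.IsQuasiHyperbolic) {x b : B}
    (hb : b ∈ Φ.omegaLimit x) :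
    finrank ℝ E - finrank ℝ (Φ.stable x) ≤ finrank ℝ (Φ.unstable b) := by
  obtain ⟨W, hW⟩ := (Φ.stable x).exists_isCompl
  obtain ⟨K, t₀, hK⟩ := hqh.exists_norm_apply_le_norm_apply x hW.disjoint
  obtain ⟨𝒰, h𝒰, hb𝒰⟩ := mapClusterPt_iff_ultrafilter.mp hb
  rw [← Submodule.finrank_add_eq_of_isCompl hW, Nat.add_sub_cancel_left]
  refine le_finrank_of_forall_tendsto_mem 𝒰 (V := fun t => W.map (Φ.P t x : E →ₗ[ℝ] E))
    (fun t => (Submodule.equivMapOfInjective _ (Φ.P_injective t x) W).finrank_eq.le) ?_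
  intro z z₀ hzV hz hlim
  refine ⟨K, fun τ hτ => Φ.norm_apply_le_of_tendsto hb𝒰 hlim (-τ) ?_⟩
  filter_upwards [h𝒰 (eventually_ge_atTop (max t₀ τ))] with t ht
  obtain ⟨v, hvW, hv⟩ := hzV t
  change Φ.P t x v = z t at hv
  calc ‖Φ.P (-τ) (Φ.flow t x) (z t)‖ = ‖Φ.P (-τ + t) x v‖ := by rw [← hv, P_apply]
    _ ≤ K * ‖Φ.P t x v‖ := hK t (le_of_max_le_left ht) v hvW _
        ⟨by linarith [le_of_max_le_right ht], by linarith⟩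
    _ = K := by rw [hv, hz t, mul_one]

end LinearCocycle

/-- Sacker–Sell inequality: for a quasi-hyperbolic continuous linear cocycle,
if `a ∈ α(x)` and `b ∈ ω(x)` then `dim E^u(b) ≥ dim 𝐄 − dim E^s(x)` and
`dim E^s(a) ≥ dim 𝐄 − dim E^u(x)`. -/
theorem limit_set_dimension_inequality
    [CompactSpace B] [FiniteDimensional ℝ E]
    (Φ : LinearCocycle B E) (hqh : Φ.IsQuasiHyperbolic)
    (x : B) (a : B) (ha : a ∈ Φ.alphaLimit x)
    (b : B) (hb : b ∈ Φ.omegaLimit x) :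
    Module.finrank ℝ E - Module.finrank ℝ (Φ.stable x) ≤
        Module.finrank ℝ (Φ.unstable b) ∧
    Module.finrank ℝ E - Module.finrank ℝ (Φ.unstable x) ≤
        Module.finrank ℝ (Φ.stable a) := by
  refine ⟨hqh.finrank_sub_finrank_stable_le hb, ?_⟩
  have ha' : a ∈ Φ.reverse.omegaLimit x := by rwa [LinearCocycle.omegaLimit_reverse]
  have h := hqh.reverse.finrank_sub_finrank_stable_le ha'
  rwa [LinearCocycle.stable_reverse, LinearCocycle.unstable_reverse] at h
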